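/- Let S be the cubic surface xyz = t³ in P^3. The only lines contained in S are the three lines {x = t = 0}, {y = t = 0}, {z = t = 0}. -/
import Mathlib

open Polynomial

private lemma aux_root (u w : Fin 4 → ℂ)
    (h : ∀ a : ℂ, (u 0 * a + w 0) * (u 1 * a + w 1) * (u 2 * a + w 2)
        = (u 3 * a + w 3) ^ 3)
    (h3 : u 3 ≠ 0) : ∃ r : ℂ, ∀ i : Fin 4, u i * r + w i = 0 := by
  set P : Fin 4 → ℂ[X] := fun i => C (u i) * X + C (w i) with hP
  have hev : ∀ i (a : ℂ), (P i).eval a = u i * a + w i := by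
    intro i a; simp [hP]
  have hPQ : P 0 * P 1 * P 2 = (P 3) ^ 3 := by
    apply Polynomial.funext
    intro a
    simp only [eval_mul, eval_pow, hev]
    exact h a
  set r : ℂ := -(w 3 / u 3) with hr
  have hfac : P 3 = C (u 3) * (X - C r) := by
    rw [mul_sub, ← C_mul, hr]
    have : u 3 * -(w 3 / u 3) = -(w 3) := by field_simp
    rw [this]
    simp [hP, sub_neg_eq_add]
  have hP3ne : P 3 ≠ 0 := by
    rw [hfac]
    exact mul_ne_zero (by simpa using h3) (X_sub_C_ne_zero r)
  have hprodne : P 0 * P 1 * P 2 ≠ 0 := by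
    rw [hPQ]; exact pow_ne_zero _ hP3ne
  have hne0 : P 0 ≠ 0 := fun hh => hprodne (by rw [hh]; ring)
  have hne1 : P 1 ≠ 0 := fun hh => hprodne (by rw [hh]; ring)
  have hne2 : P 2 ≠ 0 := fun hh => hprodne (by rw [hh]; ring)
  have hroots3 : (P 3).roots = {r} := by
    rw [hfac, roots_C_mul _ h3, roots_X_sub_C]
  have hroots : (P 0).roots + (P 1).roots + (P 2).roots = 3 • ({r} : Multiset ℂ) := by
    rw [← roots_mul (mul_ne_zero hne0 hne1), ← roots_mul hprodne, hPQ,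
      roots_pow, hroots3]
  have hcard : ∀ i : Fin 4, Multiset.card (P i).roots ≤ 1 := fun i =>
    le_trans (card_roots' _) natDegree_linear_le
  have hcardsum : Multiset.card (P 0).roots + Multiset.card (P 1).roots
      + Multiset.card (P 2).roots = 3 := by
    have := congrArg Multiset.card hroots
    simpa using this
  have h0c := hcard 0
  have h1c := hcard 1
  have h2c := hcard 2
  have key : ∀ q : ℂ[X], q.roots ≤ (P 0).roots + (P 1).roots + (P 2).roots →
      Multiset.card q.roots = 1 → q.eval r = 0 := by
    intro q hle hc
    obtain ⟨s, hs⟩ := Multiset.card_eq_one.mp hc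
    have hsmem : s ∈ (P 0).roots + (P 1).roots + (P 2).roots :=
      Multiset.mem_of_le hle (by simp [hs])
    rw [hroots] at hsmem
    have hsr : s = r := by
      rw [Multiset.mem_nsmul] at hsmem
      simpa using hsmem.2
    have : r ∈ q.roots := by rw [hs, hsr]; simp
    exact isRoot_of_mem_roots this
  have le0 : (P 0).roots ≤ (P 0).roots + (P 1).roots + (P 2).roots :=
    le_trans (Multiset.le_add_right _ _) (Multiset.le_add_right _ _)
  have le1 : (P 1).roots ≤ (P 0).roots + (P 1).roots + (P 2).roots :=
    le_trans (Multiset.le_add_left _ _) (Multiset.le_add_right _ _)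
  have le2 : (P 2).roots ≤ (P 0).roots + (P 1).roots + (P 2).roots :=
    Multiset.le_add_left _ _
  have e0 : (P 0).eval r = 0 := key _ le0 (by omega)
  have e1 : (P 1).eval r = 0 := key _ le1 (by omega)
  have e2 : (P 2).eval r = 0 := key _ le2 (by omega)
  have e3 : (P 3).eval r = 0 := by rw [hfac]; simp
  rw [hev] at e0 e1 e2 e3
  refine ⟨r, fun i => ?_⟩
  fin_cases i <;> assumption

/-- the only lines contained in the cubic surface `xyz = t³` in ℙ³ are
`{x = t = 0}`, `{y = t = 0}`, `{z = t = 0}`.  A line is the projectivization of the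
span of two linearly independent vectors `u, w : Fin 4 → ℂ` (coordinates `x,y,z,t` at
indices `0,1,2,3`). -/
theorem lines_on_xyz_eq_t3
    (u w : Fin 4 → ℂ)
    (hli : LinearIndependent ℂ ![u, w])
    (hS : ∀ a b : ℂ,
      (a * u 0 + b * w 0) * (a * u 1 + b * w 1) * (a * u 2 + b * w 2)
        = (a * u 3 + b * w 3) ^ 3) :
    (u 0 = 0 ∧ w 0 = 0 ∧ u 3 = 0 ∧ w 3 = 0) ∨
    (u 1 = 0 ∧ w 1 = 0 ∧ u 3 = 0 ∧ w 3 = 0) ∨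
    (u 2 = 0 ∧ w 2 = 0 ∧ u 3 = 0 ∧ w 3 = 0) := by
  have hli' := LinearIndependent.pair_iff.mp hli
  by_cases hu3 : u 3 = 0
  · by_cases hw3 : w 3 = 0
    · -- RHS identically zero: product of linear forms ≡ 0
      -- use polynomials in one variable with b = 1
      set P : Fin 4 → ℂ[X] := fun i => C (u i) * X + C (w i) with hP
      have hPQ : P 0 * P 1 * P 2 = 0 := by
        have : (P 0 * P 1 * P 2) = (P 3) ^ 3 := by
          apply Polynomial.funext
          intro a
          have := hS a 1
          simp only [eval_mul, eval_pow, hP, eval_add, eval_C, eval_X]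
          linear_combination this
        rw [this, hP]
        simp [hu3, hw3]
      have : P 0 = 0 ∨ P 1 = 0 ∨ P 2 = 0 := by
        rcases mul_eq_zero.mp hPQ with h | h
        · rcases mul_eq_zero.mp h with h | h
          · exact Or.inl h
          · exact Or.inr (Or.inl h)
        · exact Or.inr (Or.inr h)
      have hz : ∀ i : Fin 4, P i = 0 → u i = 0 ∧ w i = 0 := by
        intro i hi
        constructor
        · have := congrArg (fun p => Polynomial.coeff p 1) hi
          simpa [hP] using this
        · have := congrArg (fun p => Polynomial.coeff p 0) hi
          simpa [hP] using this
      rcases this with h | h | h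
      · exact Or.inl ⟨(hz 0 h).1, (hz 0 h).2, hu3, hw3⟩
      · exact Or.inr (Or.inl ⟨(hz 1 h).1, (hz 1 h).2, hu3, hw3⟩)
      · exact Or.inr (Or.inr ⟨(hz 2 h).1, (hz 2 h).2, hu3, hw3⟩)
    · -- w 3 ≠ 0, u 3 = 0 : swap roles of u and w
      exfalso
      obtain ⟨r, hr⟩ := aux_root w u (fun b => by linear_combination hS 1 b) hw3
      have hr3 := hr 3
      rw [hu3, add_zero] at hr3
      have hr0 : r = 0 := by
        rcases mul_eq_zero.mp hr3 with h | h
        · exact absurd h hw3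
        · exact h
      have hu : ∀ i, u i = 0 := by
        intro i
        have := hr i
        rwa [hr0, mul_zero, zero_add] at this
      have : (1 : ℂ) • u + (0 : ℂ) • w = 0 := by
        funext i; simp [hu i]
      exact one_ne_zero (hli' 1 0 this).1
  · -- u 3 ≠ 0
    exfalso
    obtain ⟨r, hr⟩ := aux_root u w (fun a => by linear_combination hS a 1) hu3
    have : (r : ℂ) • u + (1 : ℂ) • w = 0 := by
      funext i
      have := hr i
      simpa [mul_comm] using this
    exact one_ne_zero (hli' r 1 this).2
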